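/- arXiv:2506.19980 — 16 statements merged into one kernel-verified Lean document; each statement's English description precedes it below -/
import Mathlib

section
/- If a bounded lattice with a unary complementation operation ' satisfies the identity x ∧ y = x ∧ (x' ∨ y), then it satisfies x'' = x for all x. -/
/-- A lattice with complementation satisfying x ∧ y = x ∧ (x' ∨ y) satisfies x'' = x. -/
theorem stmt_0 {L : Type*} [Lattice L] [BoundedOrder L] (c : L → L)
    (hsup : ∀ x : L, x ⊔ c x = ⊤) (hinf : ∀ x : L, x ⊓ c x = ⊥)
    (hid : ∀ x y : L, x ⊓ y = x ⊓ (c x ⊔ y)) :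
    ∀ x : L, c (c x) = x := by
  have h1 : ∀ x : L, x ≤ c (c x) := by
    intro x
    have := hid x (c (c x))
    rw [hsup (c x), inf_top_eq] at this
    exact le_of_inf_eq this
  intro x
  refine le_antisymm ?_ (h1 x)
  have htop : c (c (c x)) ⊔ x = ⊤ := by
    have : (⊤ : L) ≤ c (c (c x)) ⊔ x := by
      rw [← hsup x, sup_comm]
      exact sup_le_sup_right (h1 (c x)) x
    exact le_antisymm le_top this
  have := hid (c (c x)) x
  rw [htop, inf_top_eq] at this
  exact le_of_inf_eq this
end

section
/- If a bounded lattice with a unary complementation operation ' satisfies the identity x ∨ y = x ∨ (x' ∧ y), then it satisfies x'' = x for all x. -/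
/-- A lattice with complementation satisfying x ∨ y = x ∨ (x' ∧ y) satisfies x'' = x. -/
theorem stmt_1 {L : Type*} [Lattice L] [BoundedOrder L] (c : L → L)
    (hsup : ∀ x : L, x ⊔ c x = ⊤) (hinf : ∀ x : L, x ⊓ c x = ⊥)
    (hid : ∀ x y : L, x ⊔ y = x ⊔ (c x ⊓ y)) :
    ∀ x : L, c (c x) = x := by
  have hle : ∀ x : L, c (c x) ≤ x := by
    intro x
    have h := hid x (c (c x))
    rw [hinf (c x), sup_bot_eq] at h
    exact sup_eq_left.mp h
  intro x
  refine le_antisymm (hle x) ?_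
  have h := hid (c (c x)) x
  have hb : c (c (c x)) ⊓ x = ⊥ := by
    have : c (c (c x)) ⊓ x ≤ c x ⊓ x := inf_le_inf_right x (hle (c x))
    rw [inf_comm (c x) x, hinf x] at this
    exact le_bot_iff.mp this
  rw [hb, sup_bot_eq] at h
  exact le_sup_right.trans h.le
end

section
/- Let L be a lattice with complementation satisfying the coincidence identity (x' ∧ y) ∨ (x ∧ y') = (x ∨ y) ∧ (x' ∨ y') for all x, y. Then L satisfies the identity x' ∨ (x ∧ x'') = 1. -/
/-- A lattice with complementation satisfying the coincidence identity satisfies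
x' ∨ (x ∧ x'') = 1. -/
theorem stmt_3 {L : Type*} [Lattice L] [BoundedOrder L] (c : L → L)
    (hsup : ∀ x : L, x ⊔ c x = ⊤) (hinf : ∀ x : L, x ⊓ c x = ⊥)
    (hco : ∀ x y : L, (c x ⊓ y) ⊔ (x ⊓ c y) = (x ⊔ y) ⊓ (c x ⊔ c y)) :
    ∀ x : L, c x ⊔ (x ⊓ c (c x)) = ⊤ := by
  intro x
  have h := hco x (c x)
  simp [hsup x, hsup (c x)] at h
  exact h
end

section
/- Let L be a lattice with complementation satisfying the coincidence identity (x' ∧ y) ∨ (x ∧ y') = (x ∨ y) ∧ (x' ∨ y'), and let a ∈ L. Then a ∧ a'' ≤ a' if and only if a = 0. -/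
/-- In a lattice with complementation satisfying the coincidence identity,
a ∧ a'' ≤ a' iff a = 0. -/
theorem stmt_4 {L : Type*} [Lattice L] [BoundedOrder L] (c : L → L)
    (hsup : ∀ x : L, x ⊔ c x = ⊤) (hinf : ∀ x : L, x ⊓ c x = ⊥)
    (hco : ∀ x y : L, (c x ⊓ y) ⊔ (x ⊓ c y) = (x ⊔ y) ⊓ (c x ⊔ c y))
    (a : L) :
    a ⊓ c (c a) ≤ c a ↔ a = ⊥ := by
  constructor
  · intro h
    have h0 : c (c a) ⊓ a = ⊥ := by
      have : a ⊓ c (c a) ≤ a ⊓ c a := le_inf inf_le_left h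
      rw [hinf] at this
      rw [inf_comm]
      exact le_bot_iff.mp this
    have h1 := hco (c a) a
    rw [h0, bot_sup_eq, inf_idem, sup_comm (c a) a, hsup, top_inf_eq,
      sup_comm, hsup] at h1
    rw [← hinf a, h1, inf_top_eq]
  · rintro rfl
    simp
end

section
/- Let L be an ortholattice satisfying the coincidence identity (x' ∧ y) ∨ (x ∧ y') = (x ∨ y) ∧ (x' ∨ y'). Then L satisfies (x ∨ y) ∧ (x ∨ y') ∧ (x' ∨ y) ∧ (x' ∨ y') = 0 for all x, y. -/
/-- An ortholattice satisfying the coincidence identity satisfies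
(x ∨ y) ∧ (x ∨ y') ∧ (x' ∨ y) ∧ (x' ∨ y') = 0. -/
theorem stmt_6 {L : Type*} [Lattice L] [BoundedOrder L] (c : L → L)
    (hsup : ∀ x : L, x ⊔ c x = ⊤) (hinf : ∀ x : L, x ⊓ c x = ⊥)
    (hinv : ∀ x : L, c (c x) = x)
    (hanti : ∀ x y : L, x ≤ y → c y ≤ c x)
    (hco : ∀ x y : L, (c x ⊓ y) ⊔ (x ⊓ c y) = (x ⊔ y) ⊓ (c x ⊔ c y)) :
    ∀ x y : L, (x ⊔ y) ⊓ (x ⊔ c y) ⊓ (c x ⊔ y) ⊓ (c x ⊔ c y) = ⊥ := by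
  intro x y
  have dm : ∀ a b : L, c (a ⊔ b) = c a ⊓ c b := by
    intro a b
    apply le_antisymm
    · exact le_inf (hanti _ _ le_sup_left) (hanti _ _ le_sup_right)
    · have h : a ⊔ b ≤ c (c a ⊓ c b) := by
        apply sup_le
        · calc a = c (c a) := (hinv a).symm
            _ ≤ c (c a ⊓ c b) := hanti _ _ inf_le_left
        · calc b = c (c b) := (hinv b).symm
            _ ≤ c (c a ⊓ c b) := hanti _ _ inf_le_right
      calc c a ⊓ c b = c (c (c a ⊓ c b)) := (hinv _).symm
        _ ≤ c (a ⊔ b) := hanti _ _ h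
  set s := (c x ⊓ y) ⊔ (x ⊓ c y) with hs
  set t := (c x ⊓ c y) ⊔ (x ⊓ y) with ht
  have h1 : (x ⊔ y) ⊓ (c x ⊔ c y) = s := (hco x y).symm
  have h2 : (x ⊔ c y) ⊓ (c x ⊔ y) = t := by
    have h := hco x (c y); rw [hinv] at h; exact h.symm
  have hts : t ≤ c s := by
    rw [hs, dm]
    apply sup_le
    · apply le_inf
      · exact le_trans inf_le_right (hanti _ _ inf_le_right)
      · exact le_trans inf_le_left (hanti _ _ inf_le_left)
    · apply le_inf
      · refine le_trans inf_le_left ?_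
        calc x = c (c x) := (hinv x).symm
          _ ≤ c (c x ⊓ y) := hanti _ _ inf_le_left
      · refine le_trans inf_le_right ?_
        calc y = c (c y) := (hinv y).symm
          _ ≤ c (x ⊓ c y) := hanti _ _ inf_le_right
  have hre : (x ⊔ y) ⊓ (x ⊔ c y) ⊓ (c x ⊔ y) ⊓ (c x ⊔ c y)
      = ((x ⊔ y) ⊓ (c x ⊔ c y)) ⊓ ((x ⊔ c y) ⊓ (c x ⊔ y)) := by
    ac_rfl
  rw [hre, h1, h2]
  refine le_antisymm ?_ bot_le
  calc s ⊓ t ≤ s ⊓ c s := inf_le_inf_left s hts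
    _ = ⊥ := hinf s
end

section
/- Let L be a non-trivial (i.e., 0 ≠ 1) lattice with complementation satisfying the coincidence identity (x' ∧ y) ∨ (x ∧ y') = (x ∨ y) ∧ (x' ∨ y'), and let a ∈ L. Then there is no element b of L that is simultaneously a complement of a and a complement of a' (i.e., satisfying a ∨ b = 1, a ∧ b = 0, a' ∨ b = 1, a' ∧ b = 0). -/
/-- In a non-trivial lattice with complementation satisfying the coincidence identity,
no element b is simultaneously a complement of a and of a'. -/
theorem stmt_7 {L : Type*} [Lattice L] [BoundedOrder L] (c : L → L)
    (hnt : (⊥ : L) ≠ ⊤)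
    (hsup : ∀ x : L, x ⊔ c x = ⊤) (hinf : ∀ x : L, x ⊓ c x = ⊥)
    (hco : ∀ x y : L, (c x ⊓ y) ⊔ (x ⊓ c y) = (x ⊔ y) ⊓ (c x ⊔ c y))
    (a : L) :
    ¬ ∃ b : L, a ⊔ b = ⊤ ∧ a ⊓ b = ⊥ ∧ c a ⊔ b = ⊤ ∧ c a ⊓ b = ⊥ := by
  rintro ⟨b, h1, h2, h3, h4⟩
  have key := hco a b
  rw [h1, h4, bot_sup_eq, top_inf_eq] at key
  -- key : a ⊓ c b = c a ⊔ c b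
  have hca_le : c a ≤ a := by
    calc c a ≤ c a ⊔ c b := le_sup_left
    _ = a ⊓ c b := key.symm
    _ ≤ a := inf_le_left
  have ha : a = ⊤ := by
    have := hsup a
    rwa [sup_eq_left.mpr hca_le] at this
  have hca : c a = ⊥ := by
    have := hinf a
    rwa [inf_eq_right.mpr hca_le] at this
  have hb : b = ⊤ := by rw [hca, bot_sup_eq] at h3; exact h3
  apply hnt
  rw [← h2, ha, hb, top_inf_eq]
end

section
/- Let L be an ortholattice such that for all x, y ∈ L, either x and y are comparable or x and y' are comparable. Then L satisfies the coincidence identity (x' ∧ y) ∨ (x ∧ y') = (x ∨ y) ∧ (x' ∨ y') for all x, y. -/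
/-- An ortholattice where any x, y are comparable, or x and y' are comparable,
satisfies the coincidence identity. -/
theorem stmt_8 {L : Type*} [Lattice L] [BoundedOrder L] (c : L → L)
    (hsup : ∀ x : L, x ⊔ c x = ⊤) (hinf : ∀ x : L, x ⊓ c x = ⊥)
    (hinv : ∀ x : L, c (c x) = x)
    (hanti : ∀ x y : L, x ≤ y → c y ≤ c x)
    (hcomp : ∀ x y : L, (x ≤ y ∨ y ≤ x) ∨ (x ≤ c y ∨ c y ≤ x)) :
    ∀ x y : L, (c x ⊓ y) ⊔ (x ⊓ c y) = (x ⊔ y) ⊓ (c x ⊔ c y) := by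
  intro x y
  rcases hcomp x y with (h | h) | (h | h)
  · have h2 : c y ≤ c x := hanti _ _ h
    have hb : x ⊓ c y = ⊥ := le_bot_iff.mp (by
      calc x ⊓ c y ≤ y ⊓ c y := inf_le_inf_right _ h
        _ = ⊥ := hinf y)
    rw [hb, sup_bot_eq, sup_eq_right.mpr h, sup_eq_left.mpr h2, inf_comm]
  · have h2 : c x ≤ c y := hanti _ _ h
    have hb : c x ⊓ y = ⊥ := le_bot_iff.mp (by
      calc c x ⊓ y ≤ c x ⊓ x := inf_le_inf_left _ h
        _ = ⊥ := by rw [inf_comm]; exact hinf x)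
    rw [hb, bot_sup_eq, sup_eq_left.mpr h, sup_eq_right.mpr h2]
  · have h2 : y ≤ c x := by have := hanti _ _ h; rwa [hinv] at this
    rw [inf_eq_right.mpr h2, inf_eq_left.mpr h, inf_eq_left.mpr
      (sup_le (h.trans le_sup_right) (h2.trans le_sup_left)), sup_comm]
  · have h2 : c x ≤ y := by have := hanti _ _ h; rwa [hinv] at this
    rw [inf_eq_left.mpr h2, inf_eq_right.mpr h, inf_eq_right.mpr
      (sup_le (h2.trans le_sup_right) (h.trans le_sup_left))]
end

section
/- Let L be the horizontal sum of two bounded chains C1 and C2 with C1 ∩ C2 = {0, 1}, equipped with a complementation '. Then L satisfies the coincidence identity (x' ∧ y) ∨ (x ∧ y') = (x ∨ y) ∧ (x' ∨ y') for all x, y. -/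
private lemma hs_cross {L : Type*} [Lattice L] [BoundedOrder L]
    (C1 C2 : Set L)
    (hcover : C1 ∪ C2 = Set.univ)
    (hcross12 : ∀ a ∈ C1, ∀ b ∈ C2, a ≤ b → a = ⊥ ∨ b = ⊤)
    (hcross21 : ∀ a ∈ C2, ∀ b ∈ C1, a ≤ b → a = ⊥ ∨ b = ⊤)
    {a b : L} (ha : a ∈ C1) (ha0 : a ≠ ⊥) (ha1 : a ≠ ⊤)
    (hb : b ∈ C2) (hb0 : b ≠ ⊥) (hb1 : b ≠ ⊤) :
    a ⊔ b = ⊤ ∧ a ⊓ b = ⊥ := by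
  have hmemsup : a ⊔ b ∈ C1 ∪ C2 := by rw [hcover]; trivial
  have hmeminf : a ⊓ b ∈ C1 ∪ C2 := by rw [hcover]; trivial
  constructor
  · rcases hmemsup with h | h
    · rcases hcross21 b hb _ h le_sup_right with h' | h'
      · exact absurd h' hb0
      · exact h'
    · rcases hcross12 a ha _ h le_sup_left with h' | h'
      · exact absurd h' ha0
      · exact h'
  · rcases hmeminf with h | h
    · rcases hcross12 _ h b hb inf_le_right with h' | h'
      · exact h'
      · exact absurd h' hb1
    · rcases hcross21 _ h a ha inf_le_left with h' | h'
      · exact h'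
      · exact absurd h' ha1

private lemma hs_comp {L : Type*} [Lattice L] [BoundedOrder L]
    (C1 C2 : Set L)
    (hcover : C1 ∪ C2 = Set.univ)
    (hchain1 : ∀ a ∈ C1, ∀ b ∈ C1, a ≤ b ∨ b ≤ a)
    (c : L → L)
    (hsup : ∀ x : L, x ⊔ c x = ⊤) (hinf : ∀ x : L, x ⊓ c x = ⊥)
    {x : L} (hx : x ∈ C1) (hx0 : x ≠ ⊥) (hx1 : x ≠ ⊤) :
    c x ∈ C2 ∧ c x ≠ ⊥ ∧ c x ≠ ⊤ := by
  have h0 : c x ≠ ⊥ := by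
    intro h
    apply hx1
    have := hsup x
    rw [h, sup_bot_eq] at this
    exact this
  have h1 : c x ≠ ⊤ := by
    intro h
    apply hx0
    have := hinf x
    rw [h, inf_top_eq] at this
    exact this
  have hmem : c x ∈ C1 ∪ C2 := by rw [hcover]; trivial
  refine ⟨?_, h0, h1⟩
  rcases hmem with h | h
  · exfalso
    rcases hchain1 x hx _ h with hle | hle
    · apply hx0
      have := hinf x
      rw [inf_eq_left.mpr hle] at this
      exact this
    · apply h0
      have := hinf x
      rw [inf_eq_right.mpr hle] at this
      exact this
  · exact h

private lemma hs_key {L : Type*} [Lattice L] [BoundedOrder L]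
    (C1 C2 : Set L)
    (hcover : C1 ∪ C2 = Set.univ)
    (hchain1 : ∀ a ∈ C1, ∀ b ∈ C1, a ≤ b ∨ b ≤ a)
    (hchain2 : ∀ a ∈ C2, ∀ b ∈ C2, a ≤ b ∨ b ≤ a)
    (hcross12 : ∀ a ∈ C1, ∀ b ∈ C2, a ≤ b → a = ⊥ ∨ b = ⊤)
    (hcross21 : ∀ a ∈ C2, ∀ b ∈ C1, a ≤ b → a = ⊥ ∨ b = ⊤)
    (c : L → L)
    (hsup : ∀ x : L, x ⊔ c x = ⊤) (hinf : ∀ x : L, x ⊓ c x = ⊥)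
    (x y : L) (hx : x ∈ C1) (hx0 : x ≠ ⊥) (hx1 : x ≠ ⊤) :
    (c x ⊓ y) ⊔ (x ⊓ c y) = (x ⊔ y) ⊓ (c x ⊔ c y) := by
  have hcover' : C2 ∪ C1 = Set.univ := by rw [Set.union_comm]; exact hcover
  obtain ⟨hcx, hcx0, hcx1⟩ := hs_comp C1 C2 hcover hchain1 c hsup hinf hx hx0 hx1
  -- dispatch trivial y
  by_cases hy0 : y = ⊥
  · subst hy0
    have hcb : c ⊥ = ⊤ := by have := hsup ⊥; rwa [bot_sup_eq] at this
    simp [hcb]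
  by_cases hy1 : y = ⊤
  · subst hy1
    have hct : c ⊤ = ⊥ := by have := hinf ⊤; rwa [top_inf_eq] at this
    simp [hct]
  have hymem : y ∈ C1 ∪ C2 := by rw [hcover]; trivial
  rcases hymem with hy | hy
  · -- same chain case
    obtain ⟨hcy, hcy0, hcy1⟩ := hs_comp C1 C2 hcover hchain1 c hsup hinf hy hy0 hy1
    have e1 : c x ⊓ y = ⊥ := by
      have := (hs_cross C1 C2 hcover hcross12 hcross21 hy hy0 hy1 hcx hcx0 hcx1).2
      rwa [inf_comm] at this
    have e2 : x ⊓ c y = ⊥ :=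
      (hs_cross C1 C2 hcover hcross12 hcross21 hx hx0 hx1 hcy hcy0 hcy1).2
    rw [e1, e2, bot_sup_eq]
    have exy : x ⊓ c y = ⊥ := e2
    have eyx : y ⊓ c x = ⊥ := by rwa [inf_comm] at e1
    rcases hchain1 x hx y hy with h | h <;>
      rcases hchain2 (c x) hcx (c y) hcy with h' | h'
    · rw [sup_eq_right.mpr h, sup_eq_right.mpr h']
      have := (hs_cross C1 C2 hcover hcross12 hcross21 hy hy0 hy1 hcy hcy0 hcy1).2
      rw [this]
    · rw [sup_eq_right.mpr h, sup_eq_left.mpr h', eyx]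
    · rw [sup_eq_left.mpr h, sup_eq_right.mpr h', exy]
    · rw [sup_eq_left.mpr h, sup_eq_left.mpr h', hinf]
  · -- cross chain case: y ∈ C2 interior
    obtain ⟨hcy, hcy0, hcy1⟩ := hs_comp C2 C1 hcover' hchain2 c hsup hinf hy hy0 hy1
    obtain ⟨hjxy, hmxy⟩ := hs_cross C1 C2 hcover hcross12 hcross21 hx hx0 hx1 hy hy0 hy1
    have hRHS : (x ⊔ y) ⊓ (c x ⊔ c y) = ⊤ := by
      have := (hs_cross C1 C2 hcover hcross12 hcross21 hcy hcy0 hcy1 hcx hcx0 hcx1).1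
      rw [hjxy, top_inf_eq, sup_comm]
      exact this
    rw [hRHS]
    -- u = c x ⊓ y is interior in C2, v = x ⊓ c y interior in C1
    have hu : c x ⊓ y ∈ C2 ∧ c x ⊓ y ≠ ⊥ ∧ c x ⊓ y ≠ ⊤ := by
      rcases hchain2 (c x) hcx y hy with h | h
      · rw [inf_eq_left.mpr h]; exact ⟨hcx, hcx0, hcx1⟩
      · rw [inf_eq_right.mpr h]; exact ⟨hy, hy0, hy1⟩
    have hv : x ⊓ c y ∈ C1 ∧ x ⊓ c y ≠ ⊥ ∧ x ⊓ c y ≠ ⊤ := by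
      rcases hchain1 x hx (c y) hcy with h | h
      · rw [inf_eq_left.mpr h]; exact ⟨hx, hx0, hx1⟩
      · rw [inf_eq_right.mpr h]; exact ⟨hcy, hcy0, hcy1⟩
    have := (hs_cross C1 C2 hcover hcross12 hcross21 hv.1 hv.2.1 hv.2.2
      hu.1 hu.2.1 hu.2.2).1
    rwa [sup_comm] at this

/-- A horizontal sum of two bounded chains with a complementation satisfies the
coincidence identity. -/
theorem stmt_10 {L : Type*} [Lattice L] [BoundedOrder L]
    (C1 C2 : Set L)
    (hcover : C1 ∪ C2 = Set.univ)
    (hinter : C1 ∩ C2 = {⊥, ⊤})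
    (hchain1 : ∀ a ∈ C1, ∀ b ∈ C1, a ≤ b ∨ b ≤ a)
    (hchain2 : ∀ a ∈ C2, ∀ b ∈ C2, a ≤ b ∨ b ≤ a)
    (hcross12 : ∀ a ∈ C1, ∀ b ∈ C2, a ≤ b → a = ⊥ ∨ b = ⊤)
    (hcross21 : ∀ a ∈ C2, ∀ b ∈ C1, a ≤ b → a = ⊥ ∨ b = ⊤)
    (c : L → L)
    (hsup : ∀ x : L, x ⊔ c x = ⊤) (hinf : ∀ x : L, x ⊓ c x = ⊥) :
    ∀ x y : L, (c x ⊓ y) ⊔ (x ⊓ c y) = (x ⊔ y) ⊓ (c x ⊔ c y) := by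
  intro x y
  by_cases hx0 : x = ⊥
  · subst hx0
    have hcb : c ⊥ = ⊤ := by have := hsup ⊥; rwa [bot_sup_eq] at this
    simp [hcb]
  by_cases hx1 : x = ⊤
  · subst hx1
    have hct : c ⊤ = ⊥ := by have := hinf ⊤; rwa [top_inf_eq] at this
    simp [hct]
  have hxmem : x ∈ C1 ∪ C2 := by rw [hcover]; trivial
  rcases hxmem with hx | hx
  · exact hs_key C1 C2 hcover hchain1 hchain2 hcross12 hcross21 c hsup hinf
      x y hx hx0 hx1
  · have hcover' : C2 ∪ C1 = Set.univ := by rw [Set.union_comm]; exact hcover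
    exact hs_key C2 C1 hcover' hchain2 hchain1 hcross21 hcross12 c hsup hinf
      x y hx hx0 hx1
end

section
/- Let L be the horizontal sum of two bounded chains with a complementation '. Then L satisfies De Morgan's laws (x ∨ y)' = x' ∧ y' and (x ∧ y)' = x' ∨ y' if and only if ' is antitone. -/
/-- A horizontal sum of two bounded chains with a complementation satisfies
De Morgan's laws iff the complementation is antitone. -/
theorem stmt_11 {L : Type*} [Lattice L] [BoundedOrder L]
    (C1 C2 : Set L)
    (hcover : C1 ∪ C2 = Set.univ)
    (hinter : C1 ∩ C2 = {⊥, ⊤})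
    (hchain1 : ∀ a ∈ C1, ∀ b ∈ C1, a ≤ b ∨ b ≤ a)
    (hchain2 : ∀ a ∈ C2, ∀ b ∈ C2, a ≤ b ∨ b ≤ a)
    (hcross12 : ∀ a ∈ C1, ∀ b ∈ C2, a ≤ b → a = ⊥ ∨ b = ⊤)
    (hcross21 : ∀ a ∈ C2, ∀ b ∈ C1, a ≤ b → a = ⊥ ∨ b = ⊤)
    (c : L → L)
    (hsup : ∀ x : L, x ⊔ c x = ⊤) (hinf : ∀ x : L, x ⊓ c x = ⊥) :
    (∀ x y : L, c (x ⊔ y) = c x ⊓ c y ∧ c (x ⊓ y) = c x ⊔ c y) ↔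
      (∀ x y : L, x ≤ y → c y ≤ c x) := by
  constructor
  · intro h x y hxy
    have h1 := (h x y).1
    rw [sup_eq_right.mpr hxy] at h1
    rw [h1]
    exact inf_le_left
  · intro hant
    have mem : ∀ z : L, z ∈ C1 ∨ z ∈ C2 := by
      intro z
      have : z ∈ C1 ∪ C2 := by rw [hcover]; trivial
      exact this
    have cbot : c ⊥ = ⊤ := by have := hsup ⊥; rwa [bot_sup_eq] at this
    have ctop : c ⊤ = ⊥ := by have := hinf ⊤; rwa [top_inf_eq] at this
    -- incomparable pairs across the two chains have sup ⊤ and inf ⊥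
    have key12 : ∀ a b : L, a ∈ C1 → b ∈ C2 → ¬ a ≤ b → ¬ b ≤ a →
        a ⊔ b = ⊤ ∧ a ⊓ b = ⊥ := by
      intro a b ha hb hab hba
      constructor
      · rcases mem (a ⊔ b) with hs | hs
        · rcases hcross21 b hb (a ⊔ b) hs le_sup_right with h | h
          · exact absurd (h ▸ bot_le) hba
          · exact h
        · rcases hcross12 a ha (a ⊔ b) hs le_sup_left with h | h
          · exact absurd (h ▸ bot_le) hab
          · exact h
      · rcases mem (a ⊓ b) with hs | hs
        · rcases hcross12 (a ⊓ b) hs b hb inf_le_right with h | h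
          · exact h
          · exact absurd (h ▸ le_top) hab
        · rcases hcross21 (a ⊓ b) hs a ha inf_le_left with h | h
          · exact h
          · exact absurd (h ▸ le_top) hba
    have key : ∀ a b : L, ¬ a ≤ b → ¬ b ≤ a → a ⊔ b = ⊤ ∧ a ⊓ b = ⊥ := by
      intro a b hab hba
      rcases mem a with ha | ha <;> rcases mem b with hb | hb
      · rcases hchain1 a ha b hb with h | h
        · exact absurd h hab
        · exact absurd h hba
      · exact key12 a b ha hb hab hba
      · obtain ⟨h1, h2⟩ := key12 b a hb ha hba hab
        rw [sup_comm a b, inf_comm a b]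
        exact ⟨h1, h2⟩
      · rcases hchain2 a ha b hb with h | h
        · exact absurd h hab
        · exact absurd h hba
    -- core: for incomparable a ∈ C1, b ∈ C2, the complements join to ⊤, meet to ⊥
    have core : ∀ a b : L, a ∈ C1 → b ∈ C2 → ¬ a ≤ b → ¬ b ≤ a →
        c a ⊔ c b = ⊤ ∧ c a ⊓ c b = ⊥ := by
      intro a b ha hb hab hba
      have ha0 : a ≠ ⊥ := by rintro rfl; exact hab bot_le
      have ha1 : a ≠ ⊤ := by rintro rfl; exact hba le_top
      have hb0 : b ≠ ⊥ := by rintro rfl; exact hba bot_le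
      have hb1 : b ≠ ⊤ := by rintro rfl; exact hab le_top
      have hca0 : c a ≠ ⊥ := by
        intro h; have := hsup a; rw [h, sup_bot_eq] at this; exact ha1 this
      have hca1 : c a ≠ ⊤ := by
        intro h; have := hinf a; rw [h, inf_top_eq] at this; exact ha0 this
      have hcb0 : c b ≠ ⊥ := by
        intro h; have := hsup b; rw [h, sup_bot_eq] at this; exact hb1 this
      have hcb1 : c b ≠ ⊤ := by
        intro h; have := hinf b; rw [h, inf_top_eq] at this; exact hb0 this
      -- a and c a are incomparable, similarly b and c b
      have hia1 : ¬ a ≤ c a := by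
        intro h; have := hinf a; rw [inf_eq_left.mpr h] at this; exact ha0 this
      have hia2 : ¬ c a ≤ a := by
        intro h; have := hinf a; rw [inf_eq_right.mpr h] at this; exact hca0 this
      have hib1 : ¬ b ≤ c b := by
        intro h; have := hinf b; rw [inf_eq_left.mpr h] at this; exact hb0 this
      have hib2 : ¬ c b ≤ b := by
        intro h; have := hinf b; rw [inf_eq_right.mpr h] at this; exact hcb0 this
      -- c a ∈ C2, c b ∈ C1
      have hca : c a ∈ C2 := by
        rcases mem (c a) with h | h
        · rcases hchain1 a ha (c a) h with h' | h'
          · exact absurd h' hia1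
          · exact absurd h' hia2
        · exact h
      have hcb : c b ∈ C1 := by
        rcases mem (c b) with h | h
        · exact h
        · rcases hchain2 b hb (c b) h with h' | h'
          · exact absurd h' hib1
          · exact absurd h' hib2
      -- c a and c b are incomparable
      have hne1 : ¬ c a ≤ c b := by
        intro h
        rcases hcross21 (c a) hca (c b) hcb h with h' | h'
        · exact hca0 h'
        · exact hcb1 h'
      have hne2 : ¬ c b ≤ c a := by
        intro h
        rcases hcross12 (c b) hcb (c a) hca h with h' | h'
        · exact hcb0 h'
        · exact hca1 h'
      exact key (c a) (c b) hne1 hne2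
    intro x y
    by_cases hxy : x ≤ y
    · constructor
      · rw [sup_eq_right.mpr hxy, inf_eq_right.mpr (hant x y hxy)]
      · rw [inf_eq_left.mpr hxy, sup_eq_left.mpr (hant x y hxy)]
    · by_cases hyx : y ≤ x
      · constructor
        · rw [sup_eq_left.mpr hyx, inf_eq_left.mpr (hant y x hyx)]
        · rw [inf_eq_right.mpr hyx, sup_eq_right.mpr (hant y x hyx)]
      · obtain ⟨hst, hib⟩ := key x y hxy hyx
        have hc : c x ⊔ c y = ⊤ ∧ c x ⊓ c y = ⊥ := by
          rcases mem x with hx | hx <;> rcases mem y with hy | hy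
          · rcases hchain1 x hx y hy with h | h
            · exact absurd h hxy
            · exact absurd h hyx
          · exact core x y hx hy hxy hyx
          · obtain ⟨h1, h2⟩ := core y x hy hx hyx hxy
            rw [sup_comm (c x) (c y), inf_comm (c x) (c y)]
            exact ⟨h1, h2⟩
          · rcases hchain2 x hx y hy with h | h
            · exact absurd h hxy
            · exact absurd h hyx
        constructor
        · rw [hst, ctop, hc.2]
        · rw [hib, cbot, hc.1]
end

section
/- In a lattice with complementation, the identity x ∧ y = x ∧ (x' ∨ y) holds for all x, y if and only if the identity x ∨ y = x ∨ (x' ∧ y) holds for all x, y. -/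
/-- Key direction: the meet identity implies the join identity. -/
theorem stmt_12_key {L : Type*} [Lattice L] [BoundedOrder L] (c : L → L)
    (hsup : ∀ x : L, x ⊔ c x = ⊤) (_hinf : ∀ x : L, x ⊓ c x = ⊥)
    (hM : ∀ x y : L, x ⊓ y = x ⊓ (c x ⊔ y)) :
    ∀ x y : L, x ⊔ y = x ⊔ (c x ⊓ y) := by
  -- Step 1 : a ≤ c (c a)
  have h1 : ∀ a : L, a ≤ c (c a) := by
    intro a
    have h := hM a (c (c a))
    rw [hsup (c a), inf_top_eq] at h
    exact inf_eq_left.mp h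
  -- Step 2 : symmetric law  c a ⊓ (a ⊔ b) = c a ⊓ b
  have hS : ∀ a b : L, c a ⊓ (a ⊔ b) = c a ⊓ b := by
    intro a b
    refine le_antisymm ?_ (inf_le_inf_left _ le_sup_right)
    calc c a ⊓ (a ⊔ b) ≤ c a ⊓ (c (c a) ⊔ b) :=
          inf_le_inf_left _ (sup_le_sup_right (h1 a) _)
      _ = c a ⊓ b := (hM (c a) b).symm
  -- Step 3 : c a ⊔ c b ⊔ (a ⊓ b) = ⊤
  have hT : ∀ a b : L, c a ⊔ c b ⊔ (a ⊓ b) = ⊤ := by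
    intro a b
    set q := c a ⊔ c b with hq
    have hqa : c q ≤ a := by
      have h2 : q ⊔ a = ⊤ := top_unique (by
        rw [← hsup a]
        exact sup_le le_sup_right (le_sup_of_le_left le_sup_left))
      have h := hS q a
      rw [h2, inf_top_eq] at h
      exact h ▸ inf_le_right
    have hqb : c q ≤ b := by
      have h2 : q ⊔ b = ⊤ := top_unique (by
        rw [← hsup b]
        exact sup_le le_sup_right (le_sup_of_le_left le_sup_right))
      have h := hS q b
      rw [h2, inf_top_eq] at h
      exact h ▸ inf_le_right
    refine top_unique ?_
    rw [← hsup q]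
    exact sup_le le_sup_left (le_sup_of_le_right (le_inf hqa hqb))
  intro x y
  set u := x ⊔ (c x ⊓ y) with hu
  -- c (c x) ≤ u
  have hx2 : c (c x) ≤ u := by
    have h2 : c x ⊔ u = ⊤ := top_unique (by
      rw [← hsup x]
      exact sup_le (le_sup_of_le_right le_sup_left) le_sup_left)
    have h := hS (c x) u
    rw [h2, inf_top_eq] at h
    exact h ▸ inf_le_right
  -- c y ⊔ u = ⊤
  have htop : c y ⊔ u = ⊤ := top_unique (by
    rw [← hT (c x) y]
    refine sup_le (sup_le ?_ le_sup_left) ?_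
    · exact le_sup_of_le_right hx2
    · exact le_sup_of_le_right le_sup_right)
  -- conclude  y ≤ u
  have hyu : y ≤ u := by
    have h := hM y u
    rw [htop, inf_top_eq] at h
    exact inf_eq_left.mp h
  exact le_antisymm (sup_le le_sup_left hyu)
    (sup_le le_sup_left (le_sup_of_le_right inf_le_right))

/-- In a lattice with complementation, the identity x ∧ y = x ∧ (x' ∨ y) holds
iff the identity x ∨ y = x ∨ (x' ∧ y) holds. -/
theorem stmt_12 {L : Type*} [Lattice L] [BoundedOrder L] (c : L → L)
    (hsup : ∀ x : L, x ⊔ c x = ⊤) (hinf : ∀ x : L, x ⊓ c x = ⊥) :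
    (∀ x y : L, x ⊓ y = x ⊓ (c x ⊔ y)) ↔ (∀ x y : L, x ⊔ y = x ⊔ (c x ⊓ y)) := by
  constructor
  · exact stmt_12_key c hsup hinf
  · intro hG x y
    exact stmt_12_key (L := Lᵒᵈ) c hinf hsup hG x y
end

section
/- If a lattice with complementation satisfies the identity x ∧ y = x ∧ (x' ∨ y) for all x, y, then it satisfies De Morgan's law (x ∨ y)' = x' ∧ y' for all x, y. -/
/-- A lattice with complementation satisfying x ∧ y = x ∧ (x' ∨ y) satisfies
De Morgan's law (x ∨ y)' = x' ∧ y'. -/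
theorem stmt_13 {L : Type*} [Lattice L] [BoundedOrder L] (c : L → L)
    (hsup : ∀ x : L, x ⊔ c x = ⊤) (hinf : ∀ x : L, x ⊓ c x = ⊥)
    (hid : ∀ x y : L, x ⊓ y = x ⊓ (c x ⊔ y)) :
    ∀ x y : L, c (x ⊔ y) = c x ⊓ c y := by
  -- Lemma B: if c x ⊔ b = ⊤ then x ≤ b
  have hB : ∀ x b : L, c x ⊔ b = ⊤ → x ≤ b := by
    intro x b h
    have : x ⊓ b = x := by rw [hid x b, h, inf_top_eq]
    exact inf_eq_left.mp this
  -- Lemma A: x ≤ c (c x)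
  have hA : ∀ x : L, x ≤ c (c x) := fun x => hB x (c (c x)) (hsup (c x))
  -- Antitonicity
  have hanti : ∀ a b : L, a ≤ b → c b ≤ c a := by
    intro a b hab
    refine hB (c b) (c a) (top_le_iff.mp ?_)
    calc ⊤ = a ⊔ c a := (hsup a).symm
    _ ≤ c (c b) ⊔ c a := sup_le_sup_right (hab.trans (hA b)) _
  intro x y
  refine le_antisymm (le_inf (hanti x _ le_sup_left) (hanti y _ le_sup_right)) ?_
  refine hB (c x ⊓ c y) (c (x ⊔ y)) (top_le_iff.mp ?_)
  have hx : x ≤ c (c x ⊓ c y) := (hA x).trans (hanti _ _ inf_le_left)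
  have hy : y ≤ c (c x ⊓ c y) := (hA y).trans (hanti _ _ inf_le_right)
  calc ⊤ = (x ⊔ y) ⊔ c (x ⊔ y) := (hsup _).symm
  _ ≤ c (c x ⊓ c y) ⊔ c (x ⊔ y) := sup_le_sup_right (sup_le hx hy) _
end

section
/- If a lattice with complementation satisfies the identity x ∧ y = x ∧ (x' ∨ y) for all x, y, then the lattice is distributive (and hence Boolean). -/
/-- A lattice with complementation satisfying x ∧ y = x ∧ (x' ∨ y) is distributive. -/
theorem stmt_14 {L : Type*} [Lattice L] [BoundedOrder L] (c : L → L)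
    (hsup : ∀ x : L, x ⊔ c x = ⊤) (hinf : ∀ x : L, x ⊓ c x = ⊥)
    (hid : ∀ x y : L, x ⊓ y = x ⊓ (c x ⊔ y)) :
    ∀ x y z : L, x ⊓ (y ⊔ z) = (x ⊓ y) ⊔ (x ⊓ z) := by
  -- Key tool (K): if c a ⊔ t = ⊤ then a ≤ t.
  have K : ∀ a t : L, c a ⊔ t = ⊤ → a ≤ t := by
    intro a t h
    have h1 : a ⊓ t = a := by rw [hid a t, h, inf_top_eq]
    calc a = a ⊓ t := h1.symm
    _ ≤ t := inf_le_right
  -- a ≤ c (c a)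
  have h1 : ∀ a : L, a ≤ c (c a) := fun a => K a (c (c a)) (hsup (c a))
  -- antitone
  have AN : ∀ a b : L, a ≤ b → c b ≤ c a := by
    intro a b hab
    apply K
    apply top_unique
    calc (⊤ : L) = a ⊔ c a := (hsup a).symm
    _ ≤ c (c b) ⊔ c a := sup_le_sup_right (hab.trans (h1 b)) _
  -- triple complement
  have h3 : ∀ a : L, c (c (c a)) = c a :=
    fun a => le_antisymm (AN _ _ (h1 a)) (h1 (c a))
  -- involution
  have h4 : ∀ a : L, c (c a) = a := by
    intro a
    refine le_antisymm ?_ (h1 a)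
    apply K
    rw [h3 a, sup_comm]
    exact hsup a
  -- the central identity: c a ⊔ c b ⊔ (a ⊓ b) = ⊤
  have hT : ∀ a b : L, c a ⊔ (c b ⊔ a ⊓ b) = ⊤ := by
    intro a b
    have hf1 : c (c a ⊔ c b) ≤ a := by
      apply K
      rw [h4]
      apply top_unique
      calc (⊤ : L) = a ⊔ c a := (hsup a).symm
      _ ≤ (c a ⊔ c b) ⊔ a := sup_le le_sup_right (le_sup_of_le_left le_sup_left)
    have hf2 : c (c a ⊔ c b) ≤ b := by
      apply K
      rw [h4]
      apply top_unique
      calc (⊤ : L) = b ⊔ c b := (hsup b).symm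
      _ ≤ (c a ⊔ c b) ⊔ b := sup_le le_sup_right (le_sup_of_le_left le_sup_right)
    apply top_unique
    calc (⊤ : L) = c (c a ⊔ c b) ⊔ c (c (c a ⊔ c b)) := (hsup _).symm
    _ = c (c a ⊔ c b) ⊔ (c a ⊔ c b) := by rw [h4]
    _ ≤ (c a ⊔ (c b ⊔ a ⊓ b)) := by
      apply sup_le
      · exact le_sup_of_le_right (le_sup_of_le_right (le_inf hf1 hf2))
      · exact sup_le le_sup_left (le_sup_of_le_right le_sup_left)
  -- the star inequality: a ≤ c b ⊔ (a ⊓ b)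
  have star : ∀ a b : L, a ≤ c b ⊔ a ⊓ b := by
    intro a b
    exact K a _ (hT a b)
  -- distributivity
  intro x y z
  apply le_antisymm
  · -- x ⊓ (y ⊔ z) ≤ (x ⊓ y) ⊔ (x ⊓ z)
    have hy : y ≤ c x ⊔ (x ⊓ y ⊔ x ⊓ z) := by
      refine (star y x).trans (sup_le le_sup_left ?_)
      rw [inf_comm]
      exact le_sup_of_le_right le_sup_left
    have hz : z ≤ c x ⊔ (x ⊓ y ⊔ x ⊓ z) := by
      refine (star z x).trans (sup_le le_sup_left ?_)
      rw [inf_comm]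
      exact le_sup_of_le_right le_sup_right
    calc x ⊓ (y ⊔ z) ≤ x ⊓ (c x ⊔ (x ⊓ y ⊔ x ⊓ z)) :=
          inf_le_inf_left x (sup_le hy hz)
    _ = x ⊓ (x ⊓ y ⊔ x ⊓ z) := (hid x _).symm
    _ ≤ x ⊓ y ⊔ x ⊓ z := inf_le_right
  · exact sup_le (inf_le_inf_left x le_sup_left) (inf_le_inf_left x le_sup_right)
end

section
/- If a lattice with complementation satisfies the identity x ∨ y = x ∨ (x' ∧ y) for all x, y, then the lattice is distributive (and hence Boolean). -/
/-- A lattice with complementation satisfying x ∨ y = x ∨ (x' ∧ y) is distributive. -/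
theorem stmt_15 {L : Type*} [Lattice L] [BoundedOrder L] (c : L → L)
    (hsup : ∀ x : L, x ⊔ c x = ⊤) (hinf : ∀ x : L, x ⊓ c x = ⊥)
    (hid : ∀ x y : L, x ⊔ y = x ⊔ (c x ⊓ y)) :
    ∀ x y z : L, x ⊓ (y ⊔ z) = (x ⊓ y) ⊔ (x ⊓ z) := by
  -- key consequence of the identity
  have hle : ∀ x y : L, y ≤ x ⊔ (c x ⊓ y) := by
    intro x y
    calc y ≤ x ⊔ y := le_sup_right
    _ = x ⊔ (c x ⊓ y) := hid x y
  -- double complement is below the original element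
  have hcc : ∀ b : L, c (c b) ≤ b := by
    intro b
    have h := hle b (c (c b))
    have h2 : c b ⊓ c (c b) = ⊥ := hinf (c b)
    rw [h2, sup_bot_eq] at h
    exact h
  -- disjointness gives comparison with the complement
  have hB : ∀ a b : L, a ⊓ b = ⊥ → a ≤ c b := by
    intro a b hab
    have h := hle (c b) a
    have h2 : c (c b) ⊓ a ≤ ⊥ := by
      calc c (c b) ⊓ a ≤ b ⊓ a := inf_le_inf_right a (hcc b)
      _ = a ⊓ b := inf_comm b a
      _ = ⊥ := hab
    calc a ≤ c b ⊔ (c (c b) ⊓ a) := h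
    _ ≤ c b ⊔ ⊥ := sup_le_sup_left h2 (c b)
    _ = c b := sup_bot_eq (c b)
  intro x y z
  apply le_antisymm
  · set s := (x ⊓ y) ⊔ (x ⊓ z) with hs
    set t := c s ⊓ (x ⊓ (y ⊔ z)) with ht
    have hty : t ⊓ y = ⊥ := by
      apply le_antisymm _ bot_le
      have h1 : t ⊓ y ≤ c s := le_trans inf_le_left inf_le_left
      have h2 : t ⊓ y ≤ s := by
        calc t ⊓ y ≤ (x ⊓ (y ⊔ z)) ⊓ y :=
          inf_le_inf_right y (inf_le_right)
        _ ≤ x ⊓ y := inf_le_inf_right y inf_le_left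
        _ ≤ s := le_sup_left
      calc t ⊓ y ≤ s ⊓ c s := le_inf h2 h1
      _ = ⊥ := hinf s
    have htz : t ⊓ z = ⊥ := by
      apply le_antisymm _ bot_le
      have h1 : t ⊓ z ≤ c s := le_trans inf_le_left inf_le_left
      have h2 : t ⊓ z ≤ s := by
        calc t ⊓ z ≤ (x ⊓ (y ⊔ z)) ⊓ z :=
          inf_le_inf_right z (inf_le_right)
        _ ≤ x ⊓ z := inf_le_inf_right z inf_le_left
        _ ≤ s := le_sup_right
      calc t ⊓ z ≤ s ⊓ c s := le_inf h2 h1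
      _ = ⊥ := hinf s
    have hyct : y ≤ c t := hB y t (by rw [inf_comm]; exact hty)
    have hzct : z ≤ c t := hB z t (by rw [inf_comm]; exact htz)
    have htbot : t = ⊥ := by
      apply le_antisymm _ bot_le
      have h1 : t ≤ y ⊔ z := le_trans inf_le_right inf_le_right
      have h2 : t ≤ c t := le_trans h1 (sup_le hyct hzct)
      calc t ≤ t ⊓ c t := le_inf le_rfl h2
      _ = ⊥ := hinf t
    have := hle s (x ⊓ (y ⊔ z))
    rw [← ht, htbot, sup_bot_eq] at this
    exact this
  · exact sup_le (inf_le_inf_left x le_sup_left) (inf_le_inf_left x le_sup_right)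
end

section
/- Let L be a lattice with complementation and define x +₁ y := (x' ∧ y) ∨ (x ∧ y'). If +₁ is associative, then L is distributive (hence a Boolean lattice). -/
/-- If the symmetric difference x +₁ y = (x' ∧ y) ∨ (x ∧ y') in a lattice with
complementation is associative, then the lattice is distributive. -/
theorem stmt_16 {L : Type*} [Lattice L] [BoundedOrder L] (c : L → L)
    (hsup : ∀ x : L, x ⊔ c x = ⊤) (hinf : ∀ x : L, x ⊓ c x = ⊥)
    (hassoc : ∀ x y z : L,
      (c ((c x ⊓ y) ⊔ (x ⊓ c y)) ⊓ z) ⊔ (((c x ⊓ y) ⊔ (x ⊓ c y)) ⊓ c z) =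
      (c x ⊓ ((c y ⊓ z) ⊔ (y ⊓ c z))) ⊔ (x ⊓ c ((c y ⊓ z) ⊔ (y ⊓ c z)))) :
    ∀ x y z : L, x ⊓ (y ⊔ z) = (x ⊓ y) ⊔ (x ⊓ z) := by
  have hcbot : c ⊥ = ⊤ := by simpa using hsup ⊥
  have hctop : c ⊤ = ⊥ := by simpa using hinf ⊤
  -- involution
  have hinv : ∀ x : L, c (c x) = x := by
    intro x
    have h := hassoc x ⊤ ⊤
    simpa [hctop, hcbot] using h
  -- key inequality: x ≤ y ⊔ (x ⊓ c y)
  have hK : ∀ x y : L, x ≤ y ⊔ (x ⊓ c y) := by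
    intro x y
    have h := hassoc x y y
    have hyy : (c y ⊓ y) ⊔ (y ⊓ c y) = (⊥ : L) := by
      rw [inf_comm (c y) y, hinf, sup_idem]
    rw [hyy, hcbot] at h
    simp only [inf_bot_eq, sup_bot_eq, inf_top_eq, bot_sup_eq] at h
    -- h : (c s ⊓ y) ⊔ (s ⊓ c y) = x, where s = (c x ⊓ y) ⊔ (x ⊓ c y)
    calc x = (c ((c x ⊓ y) ⊔ (x ⊓ c y)) ⊓ y) ⊔ (((c x ⊓ y) ⊔ (x ⊓ c y)) ⊓ c y) := h.symm
    _ ≤ y ⊔ (x ⊓ c y) := by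
        apply sup_le
        · exact le_sup_of_le_left inf_le_right
        · refine le_trans inf_le_left (sup_le ?_ ?_)
          · exact le_sup_of_le_left inf_le_right
          · exact le_sup_right
  -- disjointness gives complement bound
  have hdisj : ∀ a y : L, a ⊓ y = ⊥ → y ≤ c a := by
    intro a y h
    have := hK y (c a)
    rwa [hinv a, inf_comm y a, h, sup_bot_eq] at this
  intro x y z
  apply le_antisymm
  · set w := (x ⊓ y) ⊔ (x ⊓ z) with hw
    have ht : ∀ u : L, x ⊓ u ≤ w → (x ⊓ c w) ⊓ u = ⊥ := by
      intro u hu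
      have h1 : (x ⊓ c w) ⊓ u ≤ w ⊓ c w := by
        have : (x ⊓ c w) ⊓ u ≤ x ⊓ u := inf_le_inf_right u inf_le_left
        exact le_inf (le_trans this hu) (le_trans inf_le_left inf_le_right)
      rw [hinf] at h1
      exact le_bot_iff.mp h1
    have hy : (x ⊓ c w) ⊓ y = ⊥ := ht y le_sup_left
    have hz : (x ⊓ c w) ⊓ z = ⊥ := ht z le_sup_right
    have hyz : (x ⊓ c w) ⊓ (y ⊔ z) = ⊥ := by
      have h1 : y ≤ c (x ⊓ c w) := hdisj _ _ hy
      have h2 : z ≤ c (x ⊓ c w) := hdisj _ _ hz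
      have h3 : (x ⊓ c w) ⊓ (y ⊔ z) ≤ (x ⊓ c w) ⊓ c (x ⊓ c w) :=
        inf_le_inf_left _ (sup_le h1 h2)
      rw [hinf] at h3
      exact le_bot_iff.mp h3
    have := hK (x ⊓ (y ⊔ z)) w
    have heq : (x ⊓ (y ⊔ z)) ⊓ c w = ⊥ := by
      rw [inf_right_comm]; exact hyz
    rwa [heq, sup_bot_eq] at this
  · exact sup_le (inf_le_inf_left x le_sup_left) (inf_le_inf_left x le_sup_right)
end

section
/- Let L be a lattice with complementation and define x +₂ y := (x ∨ y) ∧ (x' ∨ y'). If +₂ is associative, then L is distributive (hence a Boolean lattice). -/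
set_option linter.unusedSectionVars false

namespace Stmt17Aux

variable {L : Type*} [Lattice L] [BoundedOrder L]

/-- symmetric difference w.r.t. a complementation function -/
def sd (c : L → L) (x y : L) : L := (x ⊔ y) ⊓ (c x ⊔ c y)

theorem sd_comm (c : L → L) (x y : L) : sd c x y = sd c y x := by
  simp [sd, sup_comm]

theorem sd_self (c : L → L) (hinf : ∀ x : L, x ⊓ c x = ⊥) (x : L) : sd c x x = ⊥ := by
  simp [sd, hinf x]

theorem c_bot (c : L → L) (hsup : ∀ x : L, x ⊔ c x = ⊤) : c (⊥ : L) = ⊤ := by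
  simpa using hsup ⊥

theorem c_top (c : L → L) (hinf : ∀ x : L, x ⊓ c x = ⊥) : c (⊤ : L) = ⊥ := by
  simpa using hinf ⊤

theorem sd_bot (c : L → L) (hsup : ∀ x : L, x ⊔ c x = ⊤) (x : L) : sd c x ⊥ = x := by
  simp [sd, c_bot c hsup]

theorem bot_sd (c : L → L) (hsup : ∀ x : L, x ⊔ c x = ⊤) (x : L) : sd c ⊥ x = x := by
  simp [sd, c_bot c hsup]

theorem sd_top (c : L → L) (hinf : ∀ x : L, x ⊓ c x = ⊥) (x : L) : sd c x ⊤ = c x := by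
  simp [sd, c_top c hinf]

theorem top_sd (c : L → L) (hinf : ∀ x : L, x ⊓ c x = ⊥) (x : L) : sd c ⊤ x = c x := by
  simp [sd, c_top c hinf]

section

variable (c : L → L) (hsup : ∀ x : L, x ⊔ c x = ⊤) (hinf : ∀ x : L, x ⊓ c x = ⊥)
  (hA : ∀ x y z : L, sd c (sd c x y) z = sd c x (sd c y z))

include hsup hinf hA

theorem sd_cancel (x y : L) : sd c x (sd c x y) = y := by
  rw [← hA, sd_self c hinf, bot_sd c hsup]

theorem sd_cancel' (x y : L) : sd c (sd c x y) y = x := by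
  rw [hA, sd_self c hinf, sd_bot c hsup]

theorem c_invol (x : L) : c (c x) = x := by
  have h1 : sd c ⊤ (sd c ⊤ x) = x := sd_cancel c hsup hinf hA ⊤ x
  rwa [top_sd c hinf, top_sd c hinf] at h1

theorem c_sd (x y : L) : c (sd c x y) = sd c x (c y) := by
  rw [← sd_top c hinf (sd c x y), hA, sd_top c hinf]

theorem c_sd' (x y : L) : c (sd c x y) = sd c (c x) y := by
  rw [sd_comm c x y, c_sd c hsup hinf hA, sd_comm]

theorem sd_le_sup (x y : L) : sd c x y ≤ x ⊔ y := inf_le_left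

theorem sup_sd (x y : L) : sd c x y ⊔ y = x ⊔ y := by
  apply le_antisymm (sup_le (sd_le_sup c hsup hinf hA x y) le_sup_right)
  apply sup_le _ le_sup_right
  calc x = sd c (sd c x y) y := (sd_cancel' c hsup hinf hA x y).symm
    _ ≤ sd c x y ⊔ y := inf_le_left

theorem W_le (x y : L) : x ⊓ (c x ⊔ y) ≤ y := by
  set w := sd c (c x) y with hw
  have hyw : sd c (c x) w = y := sd_cancel c hsup hinf hA (c x) y
  have htw : x ⊓ (c x ⊔ y) ≤ w := by
    refine le_inf inf_le_right ?_
    calc x ⊓ (c x ⊔ y) ≤ x := inf_le_left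
      _ = c (c x) := (c_invol c hsup hinf hA x).symm
      _ ≤ c (c x) ⊔ c y := le_sup_left
  calc x ⊓ (c x ⊔ y) ≤ (c x ⊔ w) ⊓ (c (c x) ⊔ c w) := by
        refine le_inf (le_trans htw le_sup_right) ?_
        calc x ⊓ (c x ⊔ y) ≤ x := inf_le_left
          _ = c (c x) := (c_invol c hsup hinf hA x).symm
          _ ≤ c (c x) ⊔ c w := le_sup_left
    _ = y := hyw

theorem W_eq (x y : L) : x ⊓ (c x ⊔ y) = x ⊓ y := by
  apply le_antisymm (le_inf inf_le_left (W_le c hsup hinf hA x y))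
  exact le_inf inf_le_left (le_trans inf_le_right le_sup_right)

theorem I1 (x y : L) : x ⊓ sd c (c x) y = x ⊓ y := by
  apply le_antisymm
  · calc x ⊓ sd c (c x) y ≤ x ⊓ (c x ⊔ y) :=
          le_inf inf_le_left (le_trans inf_le_right inf_le_left)
      _ = x ⊓ y := W_eq c hsup hinf hA x y
  · refine le_inf inf_le_left (le_inf ?_ ?_)
    · exact le_trans inf_le_right le_sup_right
    · calc x ⊓ y ≤ x := inf_le_left
        _ = c (c x) := (c_invol c hsup hinf hA x).symm
        _ ≤ c (c x) ⊔ c y := le_sup_left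

theorem sect_le {a b : L} (h : b ≤ a) : sd c a b ≤ a := by
  calc sd c a b ≤ a ⊔ b := inf_le_left
    _ = a := sup_eq_left.2 h

theorem sect_sup {a b : L} (h : b ≤ a) : sd c a b ⊔ b = a := by
  rw [sup_sd c hsup hinf hA, sup_eq_left.2 h]

theorem sect_le_c {a b : L} (h : b ≤ a) : sd c a b ≤ c b := by
  set r := sd c a b with hr
  have hb : sd c a r = b := sd_cancel c hsup hinf hA a b
  have hcb : c b = (c a ⊔ r) ⊓ (c (c a) ⊔ c r) := by
    rw [← hb, c_sd' c hsup hinf hA]; rfl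
  rw [hcb]
  refine le_inf le_sup_right ?_
  calc r ≤ a := sect_le c hsup hinf hA h
    _ = c (c a) := (c_invol c hsup hinf hA a).symm
    _ ≤ c (c a) ⊔ c r := le_sup_left

theorem sect_inf {a b : L} (h : b ≤ a) : b ⊓ sd c a b = ⊥ := by
  have h1 : b ⊓ sd c a b ≤ b ⊓ c b :=
    le_inf inf_le_left (le_trans inf_le_right (sect_le_c c hsup hinf hA h))
  rw [hinf b] at h1
  exact le_bot_iff.1 h1

theorem inf_sd_eq (q p : L) : q ⊓ sd c q p = q ⊓ c p := by
  have h1 : sd c q p = sd c (c q) (c p) := by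
    rw [← c_sd c hsup hinf hA (c q) p, ← c_sd' c hsup hinf hA q p, c_invol c hsup hinf hA]
  rw [h1, I1 c hsup hinf hA]

theorem inf_csd_eq (q p : L) : q ⊓ c (sd c q p) = q ⊓ p := by
  rw [c_sd' c hsup hinf hA, I1 c hsup hinf hA]

theorem L1 {p q : L} (hpq : p ⊓ q = ⊥) : sd c p q = p ⊔ q := by
  set k := sd c p q with hk
  have hks : k ⊔ q = p ⊔ q := sup_sd c hsup hinf hA p q
  have hcks : c k ⊓ (p ⊔ q) = ⊥ := by
    have h1 : c k ⊓ (p ⊔ q) = c k ⊓ (k ⊔ q) := by rw [hks]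
    have h2 : c k ⊓ (k ⊔ q) = c k ⊓ q := by
      have := W_eq c hsup hinf hA (c k) q
      rwa [c_invol c hsup hinf hA] at this
    have h3 : q ⊓ c k = q ⊓ p := by
      rw [hk, sd_comm c p q]
      exact inf_csd_eq c hsup hinf hA q p
    rw [h1, h2, inf_comm (c k) q, h3, inf_comm q p, hpq]
  have hkle : k ≤ p ⊔ q := sd_le_sup c hsup hinf hA p q
  have he1 : sd c (p ⊔ q) k ≤ c k := sect_le_c c hsup hinf hA hkle
  have he2 : sd c (p ⊔ q) k ≤ p ⊔ q := sect_le c hsup hinf hA hkle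
  have he : sd c (p ⊔ q) k = ⊥ := by
    apply le_bot_iff.1
    calc sd c (p ⊔ q) k ≤ c k ⊓ (p ⊔ q) := le_inf he1 he2
      _ = ⊥ := hcks
  have := sect_sup c hsup hinf hA hkle
  rw [he, bot_sup_eq] at this
  exact this

theorem D {p q : L} (hpq : p ⊓ q = ⊥) : q ≤ c p := by
  have h1 : q ≤ sd c p q := by
    rw [L1 c hsup hinf hA hpq]; exact le_sup_right
  have hk_eq : q ⊓ sd c p q = q ⊓ c p := by
    rw [sd_comm c p q]
    exact inf_sd_eq c hsup hinf hA q p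
  calc q = q ⊓ sd c p q := (inf_eq_left.2 h1).symm
    _ = q ⊓ c p := hk_eq
    _ ≤ c p := inf_le_right

theorem Wd (x y : L) : y ≤ x ⊔ (c x ⊓ y) := by
  set n := c x ⊓ y with hn
  have hny : n ≤ y := inf_le_right
  set r := sd c y n with hr
  have hrn : n ⊓ r = ⊥ := sect_inf c hsup hinf hA hny
  have hry : r ≤ y := sect_le c hsup hinf hA hny
  have hrx : c x ⊓ r = ⊥ := by
    apply le_bot_iff.1
    calc c x ⊓ r ≤ n ⊓ r := by
          refine le_inf (le_inf inf_le_left (le_trans inf_le_right hry)) inf_le_right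
      _ = ⊥ := hrn
  have hrlex : r ≤ x := by
    have := D c hsup hinf hA hrx
    rwa [c_invol c hsup hinf hA] at this
  calc y = sd c y n ⊔ n := (sect_sup c hsup hinf hA hny).symm
    _ ≤ x ⊔ n := sup_le_sup_right hrlex n

end

end Stmt17Aux

/-- If the symmetric difference x +₂ y = (x ∨ y) ∧ (x' ∨ y') in a lattice with
complementation is associative, then the lattice is distributive. -/
theorem stmt_17 {L : Type*} [Lattice L] [BoundedOrder L] (c : L → L)
    (hsup : ∀ x : L, x ⊔ c x = ⊤) (hinf : ∀ x : L, x ⊓ c x = ⊥)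
    (hassoc : ∀ x y z : L,
      (((x ⊔ y) ⊓ (c x ⊔ c y)) ⊔ z) ⊓ (c ((x ⊔ y) ⊓ (c x ⊔ c y)) ⊔ c z) =
      (x ⊔ ((y ⊔ z) ⊓ (c y ⊔ c z))) ⊓ (c x ⊔ c ((y ⊔ z) ⊓ (c y ⊔ c z)))) :
    ∀ x y z : L, x ⊓ (y ⊔ z) = (x ⊓ y) ⊔ (x ⊓ z) := by
  intro x y z
  have hA : ∀ x y z : L, Stmt17Aux.sd c (Stmt17Aux.sd c x y) z
      = Stmt17Aux.sd c x (Stmt17Aux.sd c y z) := hassoc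
  have key : ∀ u v : L, v ≤ c u ⊔ (u ⊓ v) := by
    intro u v
    have := Stmt17Aux.Wd c hsup hinf hA (c u) v
    rwa [Stmt17Aux.c_invol c hsup hinf hA] at this
  apply le_antisymm
  · have hyz : y ⊔ z ≤ c x ⊔ ((x ⊓ y) ⊔ (x ⊓ z)) := by
      refine sup_le ?_ ?_
      · exact le_trans (key x y) (sup_le_sup_left le_sup_left (c x))
      · exact le_trans (key x z) (sup_le_sup_left le_sup_right (c x))
    calc x ⊓ (y ⊔ z) ≤ x ⊓ (c x ⊔ ((x ⊓ y) ⊔ (x ⊓ z))) :=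
          le_inf inf_le_left (le_trans inf_le_right hyz)
      _ = x ⊓ ((x ⊓ y) ⊔ (x ⊓ z)) := Stmt17Aux.W_eq c hsup hinf hA x _
      _ ≤ (x ⊓ y) ⊔ (x ⊓ z) := inf_le_right
  · refine sup_le (le_inf inf_le_left (le_trans inf_le_right le_sup_left))
      (le_inf inf_le_left (le_trans inf_le_right le_sup_right))
end

section
/- Let L be a lattice with complementation satisfying the coincidence identity (x' ∧ y) ∨ (x ∧ y') = (x ∨ y) ∧ (x' ∨ y'), and define x +₁ y := (x' ∧ y) ∨ (x ∧ y'). If L satisfies the identity (x +₁ y) +₁ y = x for all x, y, then L is distributive (hence Boolean). -/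
/-- A lattice with complementation satisfying the coincidence identity and
(x +₁ y) +₁ y = x is distributive. -/
theorem stmt_18 {L : Type*} [Lattice L] [BoundedOrder L] (c : L → L)
    (hsup : ∀ x : L, x ⊔ c x = ⊤) (hinf : ∀ x : L, x ⊓ c x = ⊥)
    (hco : ∀ x y : L, (c x ⊓ y) ⊔ (x ⊓ c y) = (x ⊔ y) ⊓ (c x ⊔ c y))
    (hid : ∀ x y : L,
      (c ((c x ⊓ y) ⊔ (x ⊓ c y)) ⊓ y) ⊔ (((c x ⊓ y) ⊔ (x ⊓ c y)) ⊓ c y) = x) :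
    ∀ x y z : L, x ⊓ (y ⊔ z) = (x ⊓ y) ⊔ (x ⊓ z) := by
  -- Key lemma: every element decomposes along any b and its complement.
  have star : ∀ a b : L, a = (a ⊓ b) ⊔ (a ⊓ c b) := by
    intro a b
    set s := (c a ⊓ b) ⊔ (a ⊓ c b) with hs
    have h := hid a b
    -- h : (c s ⊓ b) ⊔ (s ⊓ c b) = a
    have h1 : c s ⊓ b ≤ a := le_sup_left.trans h.le
    have h2 : s ⊓ c b ≤ a := le_sup_right.trans h.le
    have hle : a ≤ (a ⊓ b) ⊔ (a ⊓ c b) := by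
      calc a = (c s ⊓ b) ⊔ (s ⊓ c b) := h.symm
        _ ≤ (a ⊓ b) ⊔ (a ⊓ c b) :=
            sup_le_sup (le_inf h1 inf_le_right) (le_inf h2 inf_le_right)
    exact le_antisymm hle (sup_le inf_le_left inf_le_left)
  intro x y z
  refine le_antisymm ?_ (sup_le (inf_le_inf_left x le_sup_left)
    (inf_le_inf_left x le_sup_right))
  set u := x ⊓ (y ⊔ z) with hu
  have huy : u ⊓ y = x ⊓ y := by
    rw [hu, inf_assoc, inf_eq_right.mpr (le_sup_left : y ≤ y ⊔ z)]
  set e := (u ⊓ c y) ⊓ c z with he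
  -- e is disjoint from y and z, but lies below y ⊔ z, so e = ⊥
  have hey : y ⊓ e = ⊥ := by
    have : y ⊓ e ≤ y ⊓ c y := inf_le_inf_left y (inf_le_left.trans inf_le_right)
    exact le_bot_iff.mp (this.trans (hinf y).le)
  have hez : z ⊓ e = ⊥ := by
    have : z ⊓ e ≤ z ⊓ c z := inf_le_inf_left z inf_le_right
    exact le_bot_iff.mp (this.trans (hinf z).le)
  have hyce : y ≤ c e := by
    have := star y e
    rw [hey, bot_sup_eq] at this
    exact this.le.trans inf_le_right
  have hzce : z ≤ c e := by
    have := star z e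
    rw [hez, bot_sup_eq] at this
    exact this.le.trans inf_le_right
  have hebot : e = ⊥ := by
    have h1 : e ≤ y ⊔ z := (inf_le_left.trans inf_le_left).trans inf_le_right
    have h2 : e ≤ c e := h1.trans (sup_le hyce hzce)
    have : e ≤ e ⊓ c e := le_inf le_rfl h2
    exact le_bot_iff.mp (this.trans (hinf e).le)
  have step1 : u = (x ⊓ y) ⊔ (u ⊓ c y) := by
    conv_lhs => rw [star u y, huy]
  have step2 : u ⊓ c y = ((u ⊓ c y) ⊓ z) ⊔ e := by
    conv_lhs => rw [star (u ⊓ c y) z]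
  have step3 : (u ⊓ c y) ⊓ z ≤ x ⊓ z :=
    le_inf ((inf_le_left.trans inf_le_left).trans inf_le_left) inf_le_right
  calc u = (x ⊓ y) ⊔ (((u ⊓ c y) ⊓ z) ⊔ e) := by rw [← step2, ← step1]
    _ = (x ⊓ y) ⊔ ((u ⊓ c y) ⊓ z) := by rw [hebot, sup_bot_eq]
    _ ≤ (x ⊓ y) ⊔ (x ⊓ z) := sup_le_sup_left step3 _
end
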